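/- arXiv:2107.14392 — 4 statements merged into one kernel-verified Lean document; each statement's English description precedes it below -/
import Mathlib

section
/- Kummer's First Theorem: for all real a, b (with b not a nonpositive integer) and real x, the confluent hypergeometric function satisfies ₁F₁(a; b; x) = e^x · ₁F₁(b−a; b; −x). -/
noncomputable def poch (a : ℝ) (n : ℕ) : ℝ := (ascPochhammer ℝ n).eval a

/-- Kummer's confluent hypergeometric function ₁F₁(a;b;x). -/
noncomputable def F11 (a b x : ℝ) : ℝ :=
  ∑' i : ℕ, poch a i / poch b i * x ^ i / (i.factorial : ℝ)

lemma poch_zero (a : ℝ) : poch a 0 = 1 := by simp [poch]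

lemma poch_succ_right (a : ℝ) (n : ℕ) : poch a (n + 1) = poch a n * (a + n) :=
  ascPochhammer_succ_eval n a

lemma poch_succ_left (a : ℝ) (n : ℕ) : poch a (n + 1) = a * poch (a + 1) n := by
  simp [poch, ascPochhammer_succ_left, Polynomial.eval_comp]

lemma poch_add (b : ℝ) (n m : ℕ) : poch b (n + m) = poch b n * poch (b + n) m := by
  have := congrArg (Polynomial.eval b) (ascPochhammer_mul (S := ℝ) n m)
  simpa [poch, Polynomial.eval_comp] using this.symm

lemma poch_b_ne_zero {b : ℝ} (hb : ∀ n : ℕ, b + n ≠ 0) (n : ℕ) : poch b n ≠ 0 := by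
  induction n with
  | zero => simp [poch_zero]
  | succ n ih => rw [poch_succ_right]; exact mul_ne_zero ih (hb n)

lemma kummer_key : ∀ (n : ℕ) (a b : ℝ),
    ∑ l ∈ Finset.range (n + 1),
      (-1 : ℝ) ^ l * (n.choose l : ℝ) * poch (b - a) l * poch (b + l) (n - l) = poch a n := by
  intro n
  induction n with
  | zero => intro a b; simp [poch]
  | succ n ih =>
    intro a b
    rw [Finset.sum_range_succ']
    set c := b - a with hc
    have hsplit : ∀ i ∈ Finset.range (n + 1),
        (-1 : ℝ) ^ (i + 1) * ((n + 1).choose (i + 1) : ℝ) * poch c (i + 1) *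
            poch (b + (i + 1 : ℕ)) (n + 1 - (i + 1)) =
          -((-1 : ℝ) ^ i * (n.choose i : ℝ) * poch c (i + 1) * poch (b + 1 + i) (n - i))
          - ((-1 : ℝ) ^ i * (n.choose (i + 1) : ℝ) * poch c (i + 1) * poch (b + 1 + i) (n - i)) := by
      intro i hi
      have h1 : ((n + 1).choose (i + 1) : ℝ) = (n.choose i : ℝ) + (n.choose (i + 1) : ℝ) := by
        rw [Nat.choose_succ_succ]; push_cast; ring
      have h2 : (n + 1) - (i + 1) = n - i := by omega
      have h3 : b + ((i : ℝ) + 1) = b + 1 + i := by ring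
      rw [h1, h2]
      push_cast [h3]
      ring
    rw [Finset.sum_congr rfl hsplit]
    simp only [Finset.sum_sub_distrib, Finset.sum_neg_distrib]
    have hf0 : (-1 : ℝ) ^ 0 * ((n + 1).choose 0 : ℝ) * poch c 0 * poch (b + (0 : ℕ)) (n + 1 - 0)
        = poch b (n + 1) := by simp [poch_zero]
    rw [hf0]
    have hQtop : ∑ i ∈ Finset.range (n + 1),
        (-1 : ℝ) ^ i * (n.choose (i + 1) : ℝ) * poch c (i + 1) * poch (b + 1 + i) (n - i)
        = ∑ i ∈ Finset.range n,
          (-1 : ℝ) ^ i * (n.choose (i + 1) : ℝ) * poch c (i + 1) * poch (b + 1 + i) (n - i) := by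
      rw [Finset.sum_range_succ, Nat.choose_succ_self]
      simp
    have hA : poch b (n + 1) - (∑ i ∈ Finset.range n,
          (-1 : ℝ) ^ i * (n.choose (i + 1) : ℝ) * poch c (i + 1) * poch (b + 1 + i) (n - i))
        = ∑ l ∈ Finset.range (n + 1),
          (-1 : ℝ) ^ l * (n.choose l : ℝ) * poch c l * poch (b + l) (n + 1 - l) := by
      rw [Finset.sum_range_succ']
      have : ∀ i ∈ Finset.range n,
          (-1 : ℝ) ^ (i + 1) * (n.choose (i + 1) : ℝ) * poch c (i + 1) *
            poch (b + (i + 1 : ℕ)) (n + 1 - (i + 1)) =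
          -((-1 : ℝ) ^ i * (n.choose (i + 1) : ℝ) * poch c (i + 1) * poch (b + 1 + i) (n - i)) := by
        intro i hi
        have h2 : (n + 1) - (i + 1) = n - i := by omega
        have h3 : b + ((i : ℝ) + 1) = b + 1 + i := by ring
        rw [h2]
        push_cast [h3]
        ring
      rw [Finset.sum_congr rfl this, Finset.sum_neg_distrib]
      simp [poch_zero]
      ring
    rw [hQtop]
    have : -(∑ i ∈ Finset.range (n + 1),
          (-1 : ℝ) ^ i * (n.choose i : ℝ) * poch c (i + 1) * poch (b + 1 + i) (n - i))
        - (∑ i ∈ Finset.range n,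
          (-1 : ℝ) ^ i * (n.choose (i + 1) : ℝ) * poch c (i + 1) * poch (b + 1 + i) (n - i))
        + poch b (n + 1)
        = (∑ l ∈ Finset.range (n + 1),
            (-1 : ℝ) ^ l * (n.choose l : ℝ) * poch c l * poch (b + l) (n + 1 - l))
          - ∑ i ∈ Finset.range (n + 1),
            (-1 : ℝ) ^ i * (n.choose i : ℝ) * poch c (i + 1) * poch (b + 1 + i) (n - i) := by
      rw [← hA]; ring
    rw [this, ← Finset.sum_sub_distrib]
    have hterm : ∀ l ∈ Finset.range (n + 1),
        (-1 : ℝ) ^ l * (n.choose l : ℝ) * poch c l * poch (b + l) (n + 1 - l)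
          - (-1 : ℝ) ^ l * (n.choose l : ℝ) * poch c (l + 1) * poch (b + 1 + l) (n - l)
        = a * ((-1 : ℝ) ^ l * (n.choose l : ℝ) * poch (b + 1 - (a + 1)) l *
            poch (b + 1 + l) (n - l)) := by
      intro l hl
      have hl' : l ≤ n := by simpa [Nat.lt_succ_iff] using hl
      have h1 : n + 1 - l = (n - l) + 1 := by omega
      rw [h1, poch_succ_left, poch_succ_right]
      have h2 : b + (l : ℝ) + 1 = b + 1 + l := by ring
      have h3 : b + 1 - (a + 1) = c := by rw [hc]; ring
      rw [h2, h3]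
      ring
    rw [Finset.sum_congr rfl hterm, ← Finset.mul_sum, ih (a + 1) (b + 1), ← poch_succ_left]

lemma kummer_summable_norm (a : ℝ) {b : ℝ} (x : ℝ) (hb : ∀ n : ℕ, b + n ≠ 0) :
    Summable fun i : ℕ => ‖poch a i / poch b i * x ^ i / (i.factorial : ℝ)‖ := by
  set f : ℕ → ℝ := fun i => poch a i / poch b i * x ^ i / (i.factorial : ℝ) with hf
  apply summable_of_ratio_norm_eventually_le (r := 1 / 2) (by norm_num)
  rw [Filter.eventually_atTop]
  refine ⟨⌈|a| + 2 * |b| + 4 * |x|⌉₊, fun n hn => ?_⟩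
  have hn' : |a| + 2 * |b| + 4 * |x| ≤ n :=
    (Nat.ceil_le.mp (le_refl _)).trans (by exact_mod_cast Nat.cast_le.mpr hn)
  have hbn : (0 : ℝ) < |b + n| := abs_pos.mpr (hb n)
  have hrec : f (n + 1) = f n * ((a + n) * x / ((b + n) * (n + 1))) := by
    simp only [hf]
    rw [poch_succ_right, poch_succ_right, Nat.factorial_succ, pow_succ]
    push_cast
    field_simp
  have h1 : |a + (n : ℝ)| ≤ 2 * |b + n| := by
    have hna : (0:ℝ) ≤ a + n := by
      have := abs_nonneg b; have := abs_nonneg x; have := neg_abs_le a; linarith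
    have hnb : (0:ℝ) ≤ b + n := by
      have := abs_nonneg a; have := abs_nonneg x; have := neg_abs_le b; linarith
    rw [abs_of_nonneg hna, abs_of_nonneg hnb]
    have := le_abs_self a; have := neg_abs_le b; have := abs_nonneg x
    linarith
  have h2 : 4 * |x| ≤ (n : ℝ) + 1 := by
    have := abs_nonneg a; have := abs_nonneg b; linarith
  have hno : (0:ℝ) < (n:ℝ) + 1 := by positivity
  calc ‖‖f (n+1)‖‖ = ‖f n‖ * (|a + n| * |x| / (|b + n| * ((n:ℝ)+1))) := by
        rw [norm_norm, hrec]
        simp [abs_mul, abs_div, Real.norm_eq_abs, abs_of_pos hno]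
    _ ≤ ‖f n‖ * ((2 * |b + n|) * |x| / (|b + n| * ((n:ℝ)+1))) := by
        apply mul_le_mul_of_nonneg_left _ (norm_nonneg _)
        apply div_le_div_of_nonneg_right _ (by positivity)
        · exact mul_le_mul_of_nonneg_right h1 (abs_nonneg x)
    _ = ‖f n‖ * (2 * |x| / ((n:ℝ)+1)) := by field_simp
    _ ≤ ‖f n‖ * (1 / 2) := by
        apply mul_le_mul_of_nonneg_left _ (norm_nonneg _)
        rw [div_le_div_iff₀ hno (by norm_num)]
        linarith
    _ = 1 / 2 * ‖‖f n‖‖ := by rw [norm_norm]; ring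

theorem kummer_first_theorem (a b x : ℝ) (hb : ∀ n : ℕ, b ≠ -(n : ℝ)) :
    F11 a b x = Real.exp x * F11 (b - a) b (-x) := by
  have hb' : ∀ n : ℕ, b + (n : ℝ) ≠ 0 := fun n h => hb n (by linarith)
  set g : ℕ → ℝ := fun l => poch (b - a) l / poch b l * (-x) ^ l / (l.factorial : ℝ) with hg
  have hgs : Summable fun l => ‖g l‖ := kummer_summable_norm (b - a) (-x) hb'
  have hes : Summable fun k : ℕ => ‖x ^ k / (k.factorial : ℝ)‖ := by
    have := Real.summable_pow_div_factorial |x|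
    apply this.congr
    intro k
    simp [Real.norm_eq_abs, abs_div, abs_pow]
  have hexp : Real.exp x = ∑' k : ℕ, x ^ k / (k.factorial : ℝ) := by
    rw [Real.exp_eq_exp_ℝ, NormedSpace.exp_eq_tsum_div]
  rw [F11, F11, ← hg, hexp,
    tsum_mul_tsum_eq_tsum_sum_antidiagonal_of_summable_norm hes hgs]
  apply tsum_congr
  intro n
  rw [Finset.Nat.sum_antidiagonal_eq_sum_range_succ_mk]
  have hreflect : ∑ k ∈ Finset.range (n + 1), x ^ k / (k.factorial : ℝ) * g (n - k)
      = ∑ l ∈ Finset.range (n + 1), x ^ (n - l) / ((n - l).factorial : ℝ) * g l := by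
    rw [← Finset.sum_range_reflect]
    apply Finset.sum_congr rfl
    intro j hj
    have hj' : j ≤ n := by simpa [Nat.lt_succ_iff] using hj
    have h1 : n + 1 - 1 - j = n - j := by omega
    have h2 : n - (n - j) = j := Nat.sub_sub_self hj'
    rw [h1, h2]
  rw [hreflect]
  have hterm : ∀ l ∈ Finset.range (n + 1),
      x ^ (n - l) / ((n - l).factorial : ℝ) * g l
      = ((-1 : ℝ) ^ l * (n.choose l : ℝ) * poch (b - a) l * poch (b + l) (n - l)) *
        (x ^ n / (poch b n * (n.factorial : ℝ))) := by
    intro l hl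
    have hl' : l ≤ n := by simpa [Nat.lt_succ_iff] using hl
    have hpb : poch b n = poch b l * poch (b + l) (n - l) := by
      have := poch_add b l (n - l)
      rwa [Nat.add_sub_cancel' hl'] at this
    have hfac : (n.factorial : ℝ)
        = (n.choose l : ℝ) * (l.factorial : ℝ) * ((n - l).factorial : ℝ) := by
      rw [← Nat.choose_mul_factorial_mul_factorial hl']
      push_cast
      ring
    have hxp : x ^ (n - l) * x ^ l = x ^ n := by
      rw [← pow_add, Nat.sub_add_cancel hl']
    have hbl : poch b l ≠ 0 := poch_b_ne_zero hb' l
    have hbl2 : poch (b + l) (n - l) ≠ 0 := by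
      apply poch_b_ne_zero
      intro m
      have := hb' (l + m)
      push_cast at this ⊢
      intro h; apply this; linarith
    have hch : (n.choose l : ℝ) ≠ 0 := Nat.cast_ne_zero.mpr (Nat.choose_pos hl').ne'
    have hfl : ((l.factorial : ℝ)) ≠ 0 := Nat.cast_ne_zero.mpr l.factorial_ne_zero
    have hfnl : (((n - l).factorial : ℝ)) ≠ 0 := Nat.cast_ne_zero.mpr (n - l).factorial_ne_zero
    rw [hg]
    simp only
    rw [hpb, hfac, neg_pow]
    field_simp
    rw [← hxp]
    ring
  rw [Finset.sum_congr rfl hterm, ← Finset.sum_mul, kummer_key n a b]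
  field_simp
end

section
/- Ljunggren's identity: for any natural numbers n, α and real numbers x, y, one has Σ_{k=0}^{n} C(α+k, k) C(n, k) (x−y)^{n−k} y^k = Σ_{k=0}^{n} C(α, k) C(n, k) x^{n−k} y^k. -/
/-!
Substitute `x = (x - y) + y`: expanding each `x ^ (n - k)` binomially and collecting the
coefficient of `(x - y) ^ (n - m) * y ^ m` turns the identity into
`C(α + m, m) C(n, m) = ∑ₖ C(α, k) C(n, k) C(n - k, m - k)`. Since
`C(n, k) C(n - k, m - k) = C(n, m) C(m, k)`, this is Vandermonde's identity
`C(α + m, m) = ∑ₖ C(α, k) C(m, k)`.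
-/

open Finset

namespace Nat

theorem add_choose_eq_sum_range_choose_mul_choose (a m : ℕ) :
    (a + m).choose m = ∑ k ∈ range (m + 1), a.choose k * m.choose k := by
  rw [add_choose_eq, Finset.Nat.sum_antidiagonal_eq_sum_range_succ_mk]
  congr! 1 with k hk
  rw [choose_symm (mem_range_succ_iff.mp hk)]

theorem add_choose_mul_choose_eq_sum_range (a m n : ℕ) :
    (a + m).choose m * n.choose m =
      ∑ k ∈ range (m + 1), a.choose k * n.choose k * (n - k).choose (m - k) := by
  rw [add_choose_eq_sum_range_choose_mul_choose, sum_mul]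
  congr! 1 with k hk
  rw [mul_assoc, mul_comm (m.choose k), choose_mul (mem_range_succ_iff.mp hk), mul_assoc]

end Nat

theorem sum_range_choose_mul_choose_mul_add_pow_mul_pow {R : Type*} [CommSemiring R]
    (n a : ℕ) (u y : R) :
    ∑ k ∈ range (n + 1), (a.choose k : R) * n.choose k * (u + y) ^ (n - k) * y ^ k =
      ∑ m ∈ range (n + 1), ((a + m).choose m : R) * n.choose m * u ^ (n - m) * y ^ m := by
  calc
    _ = ∑ k ∈ range (n + 1), ∑ j ∈ range (n + 1 - k),
          (a.choose k : R) * n.choose k * (n - k).choose j * u ^ (n - k - j) * y ^ (k + j) := by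
      refine sum_congr rfl fun k hk => ?_
      rw [add_comm u, add_pow, mul_sum, sum_mul, Nat.sub_add_comm (mem_range_succ_iff.mp hk)]
      refine sum_congr rfl fun j _ => ?_
      ring
    _ = ∑ m ∈ range (n + 1), ∑ k ∈ range (m + 1),
          (a.choose k : R) * n.choose k * (n - k).choose (m - k) * u ^ (n - m) * y ^ m := by
      rw [← sum_range_diag_flip]
      refine sum_congr rfl fun m _ => sum_congr rfl fun k hk => ?_
      have hkm := mem_range_succ_iff.mp hk
      rw [Nat.add_sub_cancel' hkm, Nat.sub_sub, Nat.add_sub_cancel' hkm]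
    _ = _ := by
      refine sum_congr rfl fun m _ => ?_
      rw [← sum_mul, ← sum_mul, ← Nat.cast_mul, Nat.add_choose_mul_choose_eq_sum_range]
      simp only [Nat.cast_sum, Nat.cast_mul]

theorem ljunggren_identity (n α : ℕ) (x y : ℝ) :
    ∑ k ∈ Finset.range (n + 1),
        ((α + k).choose k : ℝ) * (n.choose k : ℝ) * (x - y) ^ (n - k) * y ^ k =
      ∑ k ∈ Finset.range (n + 1),
        (α.choose k : ℝ) * (n.choose k : ℝ) * x ^ (n - k) * y ^ k := by
  simpa only [sub_add_cancel] using
    (sum_range_choose_mul_choose_mul_add_pow_mul_pow n α (x - y) y).symm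
end

section
/- If N = (N_1,…,N_{D+1}) follows the MW^{D+1}(α⁺, λ) distribution with λ⁺ = Σ_i λ_i, then the sum N⁺ = Σ_{i=1}^{D+1} N_i has probability mass function Pr(N⁺ = s) = [₀F₁(α⁺; λ⁺/4)]^{-1} · (1/(α⁺)_s) · (λ⁺/4)^s / s! for s ∈ ℕ₀, i.e. N⁺ ∼ MW^1(α⁺, λ⁺). -/
/-- The generalized hypergeometric function ₀F₁(b;x). -/
noncomputable def F01 (b x : ℝ) : ℝ := ∑' i : ℕ, x ^ i / (poch b i * (i.factorial : ℝ))

/-- The pmf of the (D+1)-variate Mixture Weight distribution MW^{D+1}(α⁺, λ). -/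
noncomputable def mwPmf (D : ℕ) (αp : ℝ) (lam : Fin (D + 1) → ℝ) (j : Fin (D + 1) → ℕ) : ℝ :=
  (F01 αp ((∑ i, lam i) / 4))⁻¹ * (poch αp (∑ i, j i))⁻¹ *
    ∏ i, (lam i / 4) ^ (j i) / ((j i).factorial : ℝ)

lemma multinomial_sum_aux {n s : ℕ} (x : Fin n → ℝ) :
    ∑ k ∈ Finset.piAntidiag Finset.univ s, ∏ i, x i ^ k i / ((k i).factorial : ℝ) =
      (∑ i, x i) ^ s / (s.factorial : ℝ) := by
  rw [Finset.sum_pow_eq_sum_piAntidiag, Finset.sum_div]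
  refine Finset.sum_congr rfl fun k hk => ?_
  obtain ⟨hsum, -⟩ := Finset.mem_piAntidiag.mp hk
  have hspec := Nat.multinomial_spec Finset.univ k
  rw [hsum] at hspec
  have hcast : ((∏ i, (k i).factorial : ℕ) : ℝ) * (Nat.multinomial Finset.univ k : ℝ)
      = (s.factorial : ℝ) := by exact_mod_cast congrArg (Nat.cast (R := ℝ)) hspec
  have hf : ∀ i : Fin n, ((k i).factorial : ℝ) ≠ 0 := fun i => by positivity
  rw [Finset.prod_div_distrib]
  push_cast at hcast ⊢
  have hm : (Nat.multinomial Finset.univ k : ℝ) ≠ 0 := by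
    exact_mod_cast (Nat.multinomial_pos _ _).ne'
  rw [← hcast, eq_div_iff (mul_ne_zero (Finset.prod_ne_zero_iff.mpr fun i _ => hf i) hm)]
  field_simp

theorem mw_sum_of_components (D : ℕ) (αp : ℝ) (hα : 0 < αp)
    (lam : Fin (D + 1) → ℝ) (hlam : ∀ i, 0 ≤ lam i) (s : ℕ) :
    ∑' j : Fin (D + 1) → ℕ, (if (∑ i, j i) = s then mwPmf D αp lam j else 0) =
      (F01 αp ((∑ i, lam i) / 4))⁻¹ * (1 / poch αp s) * ((∑ i, lam i) / 4) ^ s /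
        (s.factorial : ℝ) := by
  classical
  have hsupp : ∀ j : Fin (D + 1) → ℕ, j ∉ Finset.piAntidiag Finset.univ s →
      (if (∑ i, j i) = s then mwPmf D αp lam j else 0) = 0 := by
    intro j hj
    rw [if_neg]
    intro h
    exact hj (Finset.mem_piAntidiag.mpr ⟨h, fun i _ => Finset.mem_univ i⟩)
  rw [tsum_eq_sum hsupp]
  have : ∀ j ∈ Finset.piAntidiag Finset.univ s,
      (if (∑ i, j i) = s then mwPmf D αp lam j else 0) =
        (F01 αp ((∑ i, lam i) / 4))⁻¹ * (poch αp s)⁻¹ *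
          ∏ i, (lam i / 4) ^ (j i) / ((j i).factorial : ℝ) := by
    intro j hj
    obtain ⟨hsum, -⟩ := Finset.mem_piAntidiag.mp hj
    rw [if_pos hsum, mwPmf, hsum]
  rw [Finset.sum_congr rfl this, ← Finset.mul_sum,
    multinomial_sum_aux (fun i => lam i / 4), ← Finset.sum_div]
  ring
end

section
/- If N ∼ MW^{D+1}(α⁺, λ) with λ_i > 0 and N⁺ = Σ_{i=1}^{D+1} N_i, then the conditional distribution of (N_1,…,N_D) given N⁺ = s is Multinomial with s trials and probabilities (λ_1/λ⁺,…,λ_D/λ⁺): Pr((N_1,…,N_D) = (j_1,…,j_D) | N⁺ = s) = s!/(j_1!···j_D!(s−j⁺)!) · Π_{i=1}^D (λ_i/λ⁺)^{j_i} · (λ_{D+1}/λ⁺)^{s−j⁺} for j⁺ = Σ_{i=1}^D j_i ≤ s. -/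
lemma poch_pos {b : ℝ} (hb : 0 < b) (n : ℕ) : 0 < poch b n := by
  induction n with
  | zero => simp [poch]
  | succ n ih =>
    rw [poch, ascPochhammer_succ_eval]
    exact mul_pos ih (by positivity)

lemma poch_ge {b : ℝ} (hb : 0 < b) (n : ℕ) : min b 1 ≤ poch b n := by
  induction n with
  | zero => simp [poch, min_le_iff]
  | succ n ih =>
    rw [poch, ascPochhammer_succ_eval]
    rcases Nat.eq_zero_or_pos n with h | h
    · simp [h, poch, min_le_iff]
    · calc min b 1 ≤ poch b n * 1 := by simpa using ih
        _ ≤ poch b n * (b + n) := by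
            have := poch_pos hb n
            have : (1:ℝ) ≤ b + n := by
              have : (1:ℝ) ≤ (n:ℝ) := by exact_mod_cast h
              linarith
            nlinarith [poch_pos hb n]


lemma F01_summable {b : ℝ} (hb : 0 < b) (x : ℝ) (hx : 0 ≤ x) :
    Summable (fun i : ℕ => x ^ i / (poch b i * (i.factorial : ℝ))) := by
  have hm : 0 < min b 1 := lt_min hb one_pos
  have hp : ∀ i : ℕ, (0:ℝ) < poch b i := poch_pos hb
  have hg : Summable (fun i : ℕ => (min b 1)⁻¹ * (x ^ i / (i.factorial : ℝ))) :=
    (Real.summable_pow_div_factorial x).mul_left _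
  have h0 : ∀ i : ℕ, 0 ≤ x ^ i / (poch b i * (i.factorial : ℝ)) := fun i =>
    div_nonneg (by positivity) (by have := hp i; positivity)
  have hle : ∀ i : ℕ, x ^ i / (poch b i * (i.factorial : ℝ)) ≤
      (min b 1)⁻¹ * (x ^ i / (i.factorial : ℝ)) := by
    intro i
    have hf : (0:ℝ) < (i.factorial : ℝ) := by positivity
    calc x ^ i / (poch b i * (i.factorial : ℝ))
        ≤ x ^ i / (min b 1 * (i.factorial : ℝ)) := by
          have := hp i
          gcongr
          exact poch_ge hb i
      _ = (min b 1)⁻¹ * (x ^ i / (i.factorial : ℝ)) := by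
          rw [mul_comm (min b 1), ← div_div, div_eq_inv_mul]
  exact Summable.of_nonneg_of_le h0 hle hg

lemma F01_pos {b : ℝ} (hb : 0 < b) (x : ℝ) (hx : 0 ≤ x) : 0 < F01 b x := by
  refine Summable.tsum_pos (F01_summable hb x hx) (fun i => div_nonneg (by positivity)
    (by have := poch_pos hb i; positivity)) 0 ?_
  simp [poch]

lemma key_sum {ι : Type*} [Fintype ι] [DecidableEq ι] (x : ι → ℝ) (s : ℕ) :
    ∑ k ∈ Finset.piAntidiag Finset.univ s, ∏ i, x i ^ k i / ((k i).factorial : ℝ) =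
      (∑ i, x i) ^ s / (s.factorial : ℝ) := by
  rw [Finset.sum_pow_eq_sum_piAntidiag, Finset.sum_div]
  apply Finset.sum_congr rfl
  intro k hk
  obtain ⟨hks, -⟩ := Finset.mem_piAntidiag.1 hk
  have hspec : (∏ i, ((k i).factorial : ℝ)) * (Nat.multinomial Finset.univ k : ℝ)
      = (s.factorial : ℝ) := by
    rw [← hks]
    exact_mod_cast congrArg Nat.cast (Nat.multinomial_spec Finset.univ k)
  have hfne : (∏ i, ((k i).factorial : ℝ)) ≠ 0 :=
    Finset.prod_ne_zero_iff.2 fun i _ => Nat.cast_ne_zero.2 (Nat.factorial_ne_zero _)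
  have hsne : (s.factorial : ℝ) ≠ 0 := Nat.cast_ne_zero.2 (Nat.factorial_ne_zero _)
  rw [Finset.prod_div_distrib, div_eq_div_iff hfne hsne, ← hspec]
  ring


theorem mw_conditional_given_sum_is_multinomial (D : ℕ) (αp : ℝ) (hα : 0 < αp)
    (lam : Fin (D + 1) → ℝ) (hlam : ∀ i, 0 < lam i)
    (s : ℕ) (j : Fin D → ℕ) (hj : (∑ i, j i) ≤ s) :
    mwPmf D αp lam (Fin.snoc j (s - ∑ i, j i)) /
        (∑' k : Fin (D + 1) → ℕ, if (∑ i, k i) = s then mwPmf D αp lam k else 0) =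
      (s.factorial : ℝ) /
          ((∏ i, ((j i).factorial : ℝ)) * ((s - ∑ i, j i).factorial : ℝ)) *
        (∏ i, (lam i.castSucc / ∑ i, lam i) ^ (j i)) *
        (lam (Fin.last D) / ∑ i, lam i) ^ (s - ∑ i, j i) := by
  set L := ∑ i, lam i with hLdef
  have hL : 0 < L := Finset.sum_pos (fun i _ => hlam i) ⟨0, Finset.mem_univ 0⟩
  set m := s - ∑ i, j i with hmdef
  have hms : ∑ i, j i + m = s := Nat.add_sub_cancel' hj
  set j' : Fin (D + 1) → ℕ := Fin.snoc j m with hj'def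
  have hsum' : ∑ i, j' i = s := by
    rw [Fin.sum_univ_castSucc]
    simp [hj'def, hms]
  have hC : (0:ℝ) < F01 αp (L / 4) := F01_pos hα _ (by positivity)
  have hP : (0:ℝ) < poch αp s := poch_pos hα s
  have hden : (∑' k : Fin (D + 1) → ℕ, if (∑ i, k i) = s then mwPmf D αp lam k else 0)
      = (F01 αp (L / 4))⁻¹ * (poch αp s)⁻¹ * ((L / 4) ^ s / (s.factorial : ℝ)) := by
    rw [tsum_eq_sum (s := Finset.piAntidiag Finset.univ s)
      (fun k hk => by
        rw [if_neg]
        intro h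
        exact hk (Finset.mem_piAntidiag.2 ⟨h, fun i _ => Finset.mem_univ i⟩))]
    rw [Finset.sum_congr rfl (fun k hk => by
      obtain ⟨hks, -⟩ := Finset.mem_piAntidiag.1 hk
      rw [if_pos hks, mwPmf, hks])]
    rw [← Finset.mul_sum, key_sum]
    rw [show (∑ i, lam i / 4) = L / 4 by rw [← Finset.sum_div]]
  have hnum : mwPmf D αp lam j'
      = (F01 αp (L / 4))⁻¹ * (poch αp s)⁻¹ *
        ∏ i, (lam i / 4) ^ (j' i) / ((j' i).factorial : ℝ) := by
    rw [mwPmf, hsum']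
  have hprod : ∏ i, (lam i / 4) ^ (j' i) / ((j' i).factorial : ℝ)
      = (∏ i, (lam i / L) ^ (j' i)) * (L / 4) ^ s / ∏ i, ((j' i).factorial : ℝ) := by
    rw [Finset.prod_div_distrib]
    congr 1
    have : ∀ i, (lam i / 4) ^ (j' i) = (lam i / L) ^ (j' i) * (L / 4) ^ (j' i) := by
      intro i
      rw [← mul_pow]
      congr 1
      field_simp
    rw [Finset.prod_congr rfl (fun i _ => this i), Finset.prod_mul_distrib,
      Finset.prod_pow_eq_pow_sum, hsum']
  have hsplitP : ∏ i, (lam i / L) ^ (j' i)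
      = (∏ i, (lam i.castSucc / L) ^ (j i)) * (lam (Fin.last D) / L) ^ m := by
    rw [Fin.prod_univ_castSucc]
    simp [hj'def]
  have hsplitF : ∏ i, ((j' i).factorial : ℝ)
      = (∏ i, ((j i).factorial : ℝ)) * ((m).factorial : ℝ) := by
    rw [Fin.prod_univ_castSucc]
    simp [hj'def]
  rw [hden, hnum, hprod, hsplitP, hsplitF]
  have hCne : (F01 αp (L / 4)) ≠ 0 := ne_of_gt hC
  have hPne : poch αp s ≠ 0 := ne_of_gt hP
  have hLp : (0:ℝ) < (L / 4) ^ s := by positivity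
  have hsf : (0:ℝ) < (s.factorial : ℝ) := by positivity
  have hjf : (0:ℝ) < ∏ i, ((j i).factorial : ℝ) :=
    Finset.prod_pos fun i _ => by positivity
  have hmf : (0:ℝ) < ((m).factorial : ℝ) := by positivity
  field_simp
end
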